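/- Let Φ be a reduced irreducible root system with Weyl group W, highest root θ, simple roots (α_i)_{i∈S}. Fix J ⊆ S and let ρ∨_{S−J} be the coweight with ⟨ρ∨_{S−J}, α_i⟩ = 1 for i ∉ J and 0 for i ∈ J. Let M ≥ 1, let λ be a dominant coweight with ⟨λ, α_i⟩ ≥ M(⟨ρ∨,θ⟩ + 2) for all i ∉ J and ⟨λ, α_i⟩ = 0 for i ∈ J, and let z ∈ W. Then for every positive root α not in the span of {α_j : j ∈ J}, one has ⟨λ − Mρ∨_{S−J} + z(Mρ∨_{S−J}), α⟩ ≥ M. -/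

import Mathlib

/-!
Write a positive root `α = ∑ cᵢ αᵢ` with `cᵢ ∈ ℕ`. Since `α` is not in the span of the `αⱼ`, `j ∈ J`,
some `cᵢ` with `i ∉ J` is nonzero, so `⟨ρ∨_{S−J}, α⟩ ≥ 1`, and then
`⟨λ, α⟩ ≥ M(⟨ρ∨,θ⟩ + 2) ⟨ρ∨_{S−J}, α⟩`. On the other hand `z(ρ∨_{S−J})` pairs with `α` as
`ρ∨_{S−J}` with the root `z⁻¹α`, which is at least `-⟨ρ∨, θ⟩` because `θ` is highest.
With `t = ⟨ρ∨_{S−J}, α⟩` the left side is thus at least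
`M(⟨ρ∨,θ⟩ + 2)t − Mt − M⟨ρ∨,θ⟩ = M + M(⟨ρ∨,θ⟩ + 1)(t − 1) ≥ M`.
-/

open scoped Classical

/-- A datum packaging a reduced crystallographic root system, its Weyl group `W`,
a choice of positive roots, simple roots indexed by `S`, simple reflections, and
the Coxeter length function (characterized by counting inversions). -/
structure WeylDatum (S V W : Type*) [Fintype S] [AddCommGroup V] [Module ℝ V] [Group W] where
  /-- the action of `W` on the ambient space of the roots -/
  act : W →* V ≃ₗ[ℝ] V
  /-- the simple roots -/
  simple : S → V
  /-- the simple coroots, viewed as linear functionals -/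
  coroot : S → Module.Dual ℝ V
  /-- the simple reflections -/
  refl : S → W
  /-- the positive roots -/
  pos : Set V
  /-- the set of all roots -/
  roots : Set V
  /-- the length function of `W` -/
  len : W → ℕ
  pos_subset : pos ⊆ roots
  roots_eq : roots = pos ∪ ((fun a => -a) '' pos)
  pos_neg_disj : ∀ a ∈ pos, -a ∉ pos
  reduced : ∀ a ∈ roots, (2 : ℝ) • a ∉ roots
  simple_mem_pos : ∀ i, simple i ∈ pos
  coroot_self : ∀ i, coroot i (simple i) = 2
  act_refl : ∀ i x, act (refl i) x = x - coroot i x • simple i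
  act_roots : ∀ w, ∀ a ∈ roots, act w a ∈ roots
  gen : Subgroup.closure (Set.range refl) = ⊤
  pos_finite : pos.Finite
  crys : ∀ a ∈ pos, ∃ c : S → ℕ, a = ∑ i, (c i : ℝ) • simple i
  len_eq : ∀ w, len w = Nat.card {a : V // a ∈ pos ∧ act w a ∉ pos}

namespace WeylDatum

variable {S V W : Type*} [Fintype S] [AddCommGroup V] [Module ℝ V] [Group W]
variable (d : WeylDatum S V W)

/-- The action of `W` on coweights (linear functionals): `(w • χ) α = χ (w⁻¹ α)`. -/
def dualAct (w : W) (χ : Module.Dual ℝ V) : Module.Dual ℝ V :=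
  χ ∘ₗ (d.act w⁻¹).toLinearMap

/-- A coweight is dominant if it pairs nonnegatively with every simple root. -/
def Dominant (χ : Module.Dual ℝ V) : Prop := ∀ i, 0 ≤ χ (d.simple i)

/-- `I(χ) = {i ∈ S : ⟨χ, αᵢ⟩ = 0}`. -/
def ISet (χ : Module.Dual ℝ V) : Set S := {i | χ (d.simple i) = 0}

/-- The standard parabolic subgroup `W_K` generated by the simple reflections in `K`. -/
def parab (K : Set S) : Subgroup W := Subgroup.closure (d.refl '' K)

/-- `w` is of minimal length in the coset `w W_K`; i.e. `w ∈ W^K`. -/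
def IsMinCoset (w : W) (K : Set S) : Prop := ∀ u ∈ d.parab K, d.len w ≤ d.len (w * u)

end WeylDatum

namespace WeylDatum

variable {S V W : Type*} [Fintype S] [AddCommGroup V] [Module ℝ V] [Group W]
variable (d : WeylDatum S V W)

def IsUpperBoundOfRoots (θ : V) : Prop :=
  ∀ a ∈ d.roots, ∃ c : S → ℝ, (∀ i, 0 ≤ c i) ∧ θ - a = ∑ i, c i • d.simple i

theorem exists_coeffs_apply {a : V} (ha : a ∈ d.pos) :
    ∃ c : S → ℕ, ∀ χ : Module.Dual ℝ V, χ a = ∑ i, (c i : ℝ) * χ (d.simple i) := by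
  obtain ⟨c, rfl⟩ := d.crys a ha
  exact ⟨c, fun χ => by simp only [map_sum, map_smul, smul_eq_mul]⟩

variable {d}

theorem apply_le_apply_of_mem_pos {χ ψ : Module.Dual ℝ V}
    (hχψ : ∀ i, χ (d.simple i) ≤ ψ (d.simple i)) {a : V} (ha : a ∈ d.pos) : χ a ≤ ψ a := by
  obtain ⟨c, hc⟩ := d.exists_coeffs_apply ha
  rw [hc, hc]
  gcongr with i
  exact hχψ i

namespace Dominant

variable {χ : Module.Dual ℝ V}

theorem apply_nonneg (hχ : d.Dominant χ) {a : V} (ha : a ∈ d.pos) : 0 ≤ χ a := by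
  simpa using apply_le_apply_of_mem_pos (χ := 0) hχ ha

theorem one_le_apply (hχ : d.Dominant χ) {J : Set S} (hJ : ∀ i ∉ J, 1 ≤ χ (d.simple i))
    {a : V} (ha : a ∈ d.pos) (hspan : a ∉ Submodule.span ℝ (d.simple '' J)) : 1 ≤ χ a := by
  obtain ⟨c, rfl⟩ := d.crys a ha
  obtain ⟨i, hiJ, hci⟩ : ∃ i ∉ J, c i ≠ 0 := by
    by_contra! h
    refine hspan (Submodule.sum_mem _ fun i _ => ?_)
    by_cases hiJ : i ∈ J
    · exact Submodule.smul_mem _ _ (Submodule.subset_span ⟨i, hiJ, rfl⟩)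
    · simp [h i hiJ]
  simp only [map_sum, map_smul, smul_eq_mul]
  calc (1 : ℝ) ≤ c i * χ (d.simple i) :=
        one_le_mul_of_one_le_of_one_le (by exact_mod_cast Nat.one_le_iff_ne_zero.2 hci) (hJ i hiJ)
    _ ≤ ∑ i, (c i : ℝ) * χ (d.simple i) :=
        Finset.single_le_sum (fun j _ => mul_nonneg (Nat.cast_nonneg _) (hχ j))
          (Finset.mem_univ i)

theorem apply_le_apply_of_isUpperBoundOfRoots (hχ : d.Dominant χ) {θ : V}
    (hθ : d.IsUpperBoundOfRoots θ) {a : V} (ha : a ∈ d.roots) : χ a ≤ χ θ := by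
  obtain ⟨c, hc0, hc⟩ := hθ a ha
  have : χ θ - χ a = ∑ i, c i * χ (d.simple i) := by
    rw [← map_sub, hc]
    simp only [map_sum, map_smul, smul_eq_mul]
  linarith [Finset.sum_nonneg fun i (_ : i ∈ Finset.univ) => mul_nonneg (hc0 i) (hχ i)]

theorem neg_apply_le_apply_of_isUpperBoundOfRoots {ψ : Module.Dual ℝ V} (hχ : d.Dominant χ)
    (hχψ : ∀ i, χ (d.simple i) ≤ ψ (d.simple i)) {θ : V} (hθ : d.IsUpperBoundOfRoots θ)
    {β : V} (hβ : β ∈ d.roots) : -ψ θ ≤ χ β := by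
  have hψ : d.Dominant ψ := fun i => (hχ i).trans (hχψ i)
  rw [d.roots_eq] at hβ
  rcases hβ with hβ | ⟨γ, hγ, rfl⟩
  · linarith [hχ.apply_nonneg hβ, apply_le_apply_of_mem_pos hχψ hβ,
      hψ.apply_le_apply_of_isUpperBoundOfRoots hθ (d.pos_subset hβ)]
  · rw [map_neg]
    linarith [apply_le_apply_of_mem_pos hχψ hγ,
      hψ.apply_le_apply_of_isUpperBoundOfRoots hθ (d.pos_subset hγ)]

end Dominant

end WeylDatum

theorem statement9_general {S V W : Type*} [Fintype S] [AddCommGroup V] [Module ℝ V] [Group W]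
    (d : WeylDatum S V W) (J : Set S)
    (ρ : Module.Dual ℝ V) (hρ : ∀ i, ρ (d.simple i) = 1)
    (ρJ : Module.Dual ℝ V)
    (hρJ : ∀ i, (i ∉ J → ρJ (d.simple i) = 1) ∧ (i ∈ J → ρJ (d.simple i) = 0))
    (θ : V)
    (hhigh : ∀ a ∈ d.roots, ∃ c : S → ℝ, (∀ i, 0 ≤ c i) ∧ θ - a = ∑ i, c i • d.simple i)
    (M : ℝ) (hM : 1 ≤ M)
    (lam : Module.Dual ℝ V)
    (hlam : ∀ i, (i ∉ J → M * (ρ θ + 2) ≤ lam (d.simple i)) ∧ (i ∈ J → lam (d.simple i) = 0))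
    (z : W) (α : V) (hα : α ∈ d.pos)
    (hspan : α ∉ Submodule.span ℝ (d.simple '' J)) :
    M ≤ lam α - M * ρJ α + M * d.dualAct z ρJ α := by
  have hρJ_le_ρ : ∀ i, ρJ (d.simple i) ≤ ρ (d.simple i) := fun i => by
    by_cases hi : i ∈ J <;> simp [hρJ i, hρ i, hi]
  have hρJ_dom : d.Dominant ρJ := fun i => by
    by_cases hi : i ∈ J <;> simp [hρJ i, hi]
  have hρ_dom : d.Dominant ρ := fun i => by simp [hρ i]
  have hone : 1 ≤ ρJ α :=
    hρJ_dom.one_le_apply (fun i hi => ((hρJ i).1 hi).ge) hα hspan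
  have hαθ : ρJ α ≤ ρ θ := (WeylDatum.apply_le_apply_of_mem_pos hρJ_le_ρ hα).trans
    (hρ_dom.apply_le_apply_of_isUpperBoundOfRoots hhigh (d.pos_subset hα))
  have hlamα : M * (ρ θ + 2) * ρJ α ≤ lam α := by
    refine WeylDatum.apply_le_apply_of_mem_pos (χ := (M * (ρ θ + 2)) • ρJ) (fun i => ?_) hα
    by_cases hi : i ∈ J
    · simp [(hρJ i).2 hi, (hlam i).2 hi]
    · simpa [(hρJ i).1 hi] using (hlam i).1 hi
  have htwist : -ρ θ ≤ d.dualAct z ρJ α :=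
    hρJ_dom.neg_apply_le_apply_of_isUpperBoundOfRoots hρJ_le_ρ hhigh
      (d.act_roots z⁻¹ α (d.pos_subset hα))
  have hM0 : 0 ≤ M := by linarith
  nlinarith [mul_nonneg hM0 (mul_nonneg (by linarith : 0 ≤ ρ θ + 1) (sub_nonneg.2 hone)),
    mul_le_mul_of_nonneg_left htwist hM0]

/-- For `J ⊆ S`, `ρ∨_{S−J}` the coweight pairing to `1` with `αᵢ` for `i ∉ J` and
`0` for `i ∈ J`, `M ≥ 1`, `λ` dominant with `⟨λ, αᵢ⟩ ≥ M(⟨ρ∨, θ⟩ + 2)` for `i ∉ J` and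
`⟨λ, αᵢ⟩ = 0` for `i ∈ J`, `z ∈ W`, and every positive root `α` not in the span of
`{α_j : j ∈ J}`, one has `⟨λ − Mρ∨_{S−J} + z(Mρ∨_{S−J}), α⟩ ≥ M`. -/
theorem statement9 {S V W : Type*} [Fintype S] [AddCommGroup V] [Module ℝ V] [Group W]
    [Finite W] (d : WeylDatum S V W) (J : Set S)
    (ρ : Module.Dual ℝ V) (hρ : ∀ i, ρ (d.simple i) = 1)
    (ρJ : Module.Dual ℝ V)
    (hρJ : ∀ i, (i ∉ J → ρJ (d.simple i) = 1) ∧ (i ∈ J → ρJ (d.simple i) = 0))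
    (θ : V) (hθ : θ ∈ d.pos)
    (hhigh : ∀ a ∈ d.roots, ∃ c : S → ℝ, (∀ i, 0 ≤ c i) ∧ θ - a = ∑ i, c i • d.simple i)
    (M : ℝ) (hM : 1 ≤ M)
    (lam : Module.Dual ℝ V) (hdom : d.Dominant lam)
    (hlam : ∀ i, (i ∉ J → M * (ρ θ + 2) ≤ lam (d.simple i)) ∧ (i ∈ J → lam (d.simple i) = 0))
    (z : W) (α : V) (hα : α ∈ d.pos)
    (hspan : α ∉ Submodule.span ℝ (d.simple '' J)) :
    M ≤ lam α - M * ρJ α + M * d.dualAct z ρJ α :=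
  statement9_general d J ρ hρ ρJ hρJ θ hhigh M hM lam hlam z α hα hspan
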